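/- Let s ↦ (u(s), v(s), y(s), z(s)) be an affinely parametrized geodesic of the Biv pp-wave metric (with z(s) ≠ 0). Then the following nine quantities are constant along the geodesic: I₁ = −u̇, I₂ = −2z^{−2}u̇ − v̇, I₃ = ẏ, I₄ = u ẏ − y u̇, Q₁ = z^{−2}(−z⁴ ẏ² + 2y z³ ẏ ż − (2u̇² + z² ż²) y²), Q₂ = z^{−2}(2y u̇² − z³ ẏ ż + y z² ż²), Q₃ = z^{−2}(z³ u̇ (z ẏ − ż y) + u y (2u̇² + z² ż²) − u z³ ẏ ż), Q₄ = z^{−2}(2u u̇² − z³ u̇ ż + u z² ż²), Q₅ = z^{−2}(u²(2u̇² + z² ż²) + z⁴ u̇² − 2u z³ u̇ ż). -/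

import Mathlib

open scoped BigOperators

noncomputable section

namespace BivPPWave

/-- Partial derivative `∂_σ f` at `x ∈ ℝ⁴`. -/
def pderiv' (f : (Fin 4 → ℝ) → ℝ) (σ : Fin 4) (x : Fin 4 → ℝ) : ℝ :=
  fderiv ℝ f x (Pi.single σ 1)

/-- The Biv pp-wave metric, coordinates `u = x 0`, `v = x 1`, `y = x 2`, `z = x 3`. -/
def Biv (x : Fin 4 → ℝ) : Fin 4 → Fin 4 → ℝ :=
  ![![-2 / (x 3)^2, -1, 0, 0],
    ![-1, 0, 0, 0],
    ![0, 0, 1, 0],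
    ![0, 0, 0, 1]]

/-- Components `G^{αβ}` of the inverse metric. -/
def metricInv (G : (Fin 4 → ℝ) → Fin 4 → Fin 4 → ℝ) (x : Fin 4 → ℝ) :
    Fin 4 → Fin 4 → ℝ :=
  fun α β => (Matrix.of (G x))⁻¹ α β

/-- Christoffel symbols `Γ^α_{μν}` of the metric `G`. -/
def christoffel (G : (Fin 4 → ℝ) → Fin 4 → Fin 4 → ℝ) (x : Fin 4 → ℝ)
    (α μ ν : Fin 4) : ℝ :=
  (1/2) * ∑ σ, metricInv G x α σ *
    (pderiv' (fun y => G y σ ν) μ x + pderiv' (fun y => G y σ μ) ν x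
      - pderiv' (fun y => G y μ ν) σ x)

/-- Derivative of the `i`-th component of a curve. -/
def qd (q : ℝ → Fin 4 → ℝ) (i : Fin 4) (s : ℝ) : ℝ :=
  deriv (fun t => q t i) s

lemma metricInv_Biv (x : Fin 4 → ℝ) (h : x 3 ≠ 0) :
    (Matrix.of (Biv x))⁻¹ =
      ![![0,-1,0,0],![-1,2/(x 3)^2,0,0],![0,0,1,0],![0,0,0,1]] := by
  apply Matrix.inv_eq_right_inv
  ext i j
  fin_cases i <;> fin_cases j <;>
    · erw [Matrix.mul_apply]
      simp [Biv, Matrix.mul_apply, Fin.sum_univ_four, Matrix.vecHead, Matrix.vecTail]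
      try field_simp
      try ring

lemma pderiv'_const (c : ℝ) (μ : Fin 4) (x : Fin 4 → ℝ) :
    pderiv' (fun _ => c) μ x = 0 := by
  simp [pderiv']

lemma pderiv'_B00 (x : Fin 4 → ℝ) (h : x 3 ≠ 0) (μ : Fin 4) :
    pderiv' (fun y : Fin 4 → ℝ => -2 / (y 3)^2) μ x
      = if μ = 3 then 4/(x 3)^3 else 0 := by
  have h1 : HasDerivAt (fun t : ℝ => -2 / t ^ 2) (4 / (x 3)^3) (x 3) := by
    have h2 := (hasDerivAt_zpow (-2) (x 3) (Or.inl h)).const_mul (-2 : ℝ)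
    have e1 : (fun t : ℝ => -2 / t ^ 2) = fun t : ℝ => -2 * t ^ (-2 : ℤ) := by
      funext t
      rw [zpow_neg, div_eq_mul_inv, show ((2:ℤ)) = ((2:ℕ):ℤ) from rfl, zpow_natCast]
    rw [e1]
    refine h2.congr_deriv ?_
    rw [show (-2 - 1 : ℤ) = -3 by norm_num, zpow_neg]
    push_cast
    rw [div_eq_mul_inv, show ((3:ℤ)) = ((3:ℕ):ℤ) from rfl, zpow_natCast]
    ring
  have hp : HasFDerivAt (fun y : Fin 4 → ℝ => y 3)
      (ContinuousLinearMap.proj 3 : (Fin 4 → ℝ) →L[ℝ] ℝ) x :=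
    (ContinuousLinearMap.proj 3 : (Fin 4 → ℝ) →L[ℝ] ℝ).hasFDerivAt
  have h3 : HasFDerivAt (fun y : Fin 4 → ℝ => -2 / (y 3)^2)
      ((4/(x 3)^3) • (ContinuousLinearMap.proj 3 : (Fin 4 → ℝ) →L[ℝ] ℝ)) x :=
    HasDerivAt.comp_hasFDerivAt (h₂ := fun t : ℝ => -2 / t ^ 2) (f := fun y : Fin 4 → ℝ => y 3) x h1 hp
  rw [pderiv', h3.fderiv]
  fin_cases μ <;> simp [Pi.single_apply]

set_option maxHeartbeats 3000000 in
lemma christoffel_Biv (x : Fin 4 → ℝ) (h : x 3 ≠ 0) (α μ ν : Fin 4) :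
    christoffel Biv x α μ ν =
      ![![![0,0,0,0],![0,0,0,0],![0,0,0,0],![0,0,0,0]],
        ![![0,0,0,-2/(x 3)^3],![0,0,0,0],![0,0,0,0],![-2/(x 3)^3,0,0,0]],
        ![![0,0,0,0],![0,0,0,0],![0,0,0,0],![0,0,0,0]],
        ![![-2/(x 3)^3,0,0,0],![0,0,0,0],![0,0,0,0],![0,0,0,0]]] α μ ν := by
  fin_cases α <;> fin_cases μ <;> fin_cases ν <;>
    · rw [christoffel, Fin.sum_univ_four]
      simp only [metricInv, metricInv_Biv x h]
      simp [Biv, pderiv'_const, pderiv'_B00 x h, Matrix.vecHead, Matrix.vecTail]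
      try ring

lemma sum0 (q : ℝ → Fin 4 → ℝ) (s : ℝ) (h : q s 3 ≠ 0) :
    ∑ μ, ∑ ν, christoffel Biv (q s) 0 μ ν * qd q μ s * qd q ν s = 0 := by
  simp [Fin.sum_univ_four, christoffel_Biv (q s) h]

lemma sum1 (q : ℝ → Fin 4 → ℝ) (s : ℝ) (h : q s 3 ≠ 0) :
    ∑ μ, ∑ ν, christoffel Biv (q s) 1 μ ν * qd q μ s * qd q ν s
      = -4/(q s 3)^3 * (qd q 0 s * qd q 3 s) := by
  simp [Fin.sum_univ_four, christoffel_Biv (q s) h, Matrix.vecHead, Matrix.vecTail]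
  ring

lemma sum2 (q : ℝ → Fin 4 → ℝ) (s : ℝ) (h : q s 3 ≠ 0) :
    ∑ μ, ∑ ν, christoffel Biv (q s) 2 μ ν * qd q μ s * qd q ν s = 0 := by
  simp [Fin.sum_univ_four, christoffel_Biv (q s) h]

lemma sum3 (q : ℝ → Fin 4 → ℝ) (s : ℝ) (h : q s 3 ≠ 0) :
    ∑ μ, ∑ ν, christoffel Biv (q s) 3 μ ν * qd q μ s * qd q ν s
      = -2/(q s 3)^3 * (qd q 0 s)^2 := by
  simp [Fin.sum_univ_four, christoffel_Biv (q s) h, Matrix.vecHead, Matrix.vecTail]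
  ring

lemma const_of_deriv_zero (I : Set ℝ) (hIconn : I.OrdConnected)
    (f : ℝ → ℝ) (hf : ∀ s ∈ I, HasDerivAt f 0 s) :
    ∀ s₁ ∈ I, ∀ s₂ ∈ I, f s₁ = f s₂ := by
  have main : ∀ a ∈ I, ∀ b ∈ I, a ≤ b → f b = f a := by
    intro a ha b hb hab
    have hsub : Set.Icc a b ⊆ I := hIconn.out ha hb
    exact constant_of_has_deriv_right_zero
      (fun x hx => (hf x (hsub hx)).continuousAt.continuousWithinAt)
      (fun x hx => (hf x (hsub (Set.mem_Icc_of_Ico hx))).hasDerivWithinAt)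
      b (Set.right_mem_Icc.2 hab)
  intro s₁ h₁ s₂ h₂
  rcases le_total s₁ s₂ with h | h
  · exact (main s₁ h₁ s₂ h₂ h).symm
  · exact main s₂ h₂ s₁ h₁ h


/-- Along any affinely parametrized geodesic of the Biv pp-wave metric
(with `z ≠ 0`), the nine listed linear and quadratic quantities are conserved. -/
theorem biv_geodesic_integrals
    (I : Set ℝ) (hI : IsOpen I) (hIconn : I.OrdConnected)
    (q : ℝ → Fin 4 → ℝ) (hq : ContDiffOn ℝ (⊤ : ℕ∞) q I)
    (hz : ∀ s ∈ I, q s 3 ≠ 0)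
    -- the affinely parametrized geodesic equations
    (hgeo : ∀ s ∈ I, ∀ α : Fin 4,
        deriv (deriv (fun t => q t α)) s
          + (∑ μ, ∑ ν, christoffel Biv (q s) α μ ν * qd q μ s * qd q ν s) = 0) :
    ∀ f ∈ ([
      -- I₁ = −u̇
      fun s => -(qd q 0 s),
      -- I₂ = −2z⁻²u̇ − v̇
      fun s => -2 / (q s 3)^2 * qd q 0 s - qd q 1 s,
      -- I₃ = ẏ
      fun s => qd q 2 s,
      -- I₄ = uẏ − yu̇
      fun s => q s 0 * qd q 2 s - q s 2 * qd q 0 s,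
      -- Q₁
      fun s => (q s 3)^(-2 : ℤ) * (-(q s 3)^4 * (qd q 2 s)^2
        + 2 * q s 2 * (q s 3)^3 * qd q 2 s * qd q 3 s
        - (2 * (qd q 0 s)^2 + (q s 3)^2 * (qd q 3 s)^2) * (q s 2)^2),
      -- Q₂
      fun s => (q s 3)^(-2 : ℤ) * (2 * q s 2 * (qd q 0 s)^2
        - (q s 3)^3 * qd q 2 s * qd q 3 s + q s 2 * (q s 3)^2 * (qd q 3 s)^2),
      -- Q₃
      fun s => (q s 3)^(-2 : ℤ) * ((q s 3)^3 * qd q 0 s * (q s 3 * qd q 2 s - qd q 3 s * q s 2)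
        + q s 0 * q s 2 * (2 * (qd q 0 s)^2 + (q s 3)^2 * (qd q 3 s)^2)
        - q s 0 * (q s 3)^3 * qd q 2 s * qd q 3 s),
      -- Q₄
      fun s => (q s 3)^(-2 : ℤ) * (2 * q s 0 * (qd q 0 s)^2
        - (q s 3)^3 * qd q 0 s * qd q 3 s + q s 0 * (q s 3)^2 * (qd q 3 s)^2),
      -- Q₅
      fun s => (q s 3)^(-2 : ℤ) * ((q s 0)^2 * (2 * (qd q 0 s)^2 + (q s 3)^2 * (qd q 3 s)^2)
        + (q s 3)^4 * (qd q 0 s)^2 - 2 * q s 0 * (q s 3)^3 * qd q 0 s * qd q 3 s)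
      ] : List (ℝ → ℝ)),
    ∀ s₁ ∈ I, ∀ s₂ ∈ I, f s₁ = f s₂ := by
  have hcomp : ∀ i : Fin 4, ContDiffOn ℝ (⊤ : ℕ∞) (fun t => q t i) I := fun i =>
    (ContinuousLinearMap.proj i : (Fin 4 → ℝ) →L[ℝ] ℝ).contDiff.comp_contDiffOn hq
  have hC1 : ∀ i : Fin 4, ∀ s ∈ I, HasDerivAt (fun t => q t i) (qd q i s) s := by
    intro i s hs
    exact (((hcomp i).contDiffAt (hI.mem_nhds hs)).differentiableAt (by simp)).hasDerivAt
  have hC2 : ∀ i : Fin 4, ∀ s ∈ I,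
      HasDerivAt (qd q i) (deriv (deriv (fun t => q t i)) s) s := by
    intro i s hs
    have hd : ContDiffOn ℝ (⊤ : ℕ∞) (deriv (fun t => q t i)) I :=
      (hcomp i).deriv_of_isOpen hI (by simp)
    exact ((hd.contDiffAt (hI.mem_nhds hs)).differentiableAt (by simp)).hasDerivAt
  have H0 : ∀ s ∈ I, HasDerivAt (qd q 0) 0 s := by
    intro s hs
    have h := hgeo s hs 0
    rw [sum0 q s (hz s hs)] at h
    have h' : deriv (deriv (fun t => q t 0)) s = 0 := by linarith
    exact h' ▸ hC2 0 s hs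
  have H1 : ∀ s ∈ I, HasDerivAt (qd q 1) (4/(q s 3)^3 * (qd q 0 s * qd q 3 s)) s := by
    intro s hs
    have h := hgeo s hs 1
    rw [sum1 q s (hz s hs)] at h
    have h' : deriv (deriv (fun t => q t 1)) s = 4/(q s 3)^3 * (qd q 0 s * qd q 3 s) := by
      have hzne := hz s hs
      field_simp at h ⊢
      linarith
    exact h' ▸ hC2 1 s hs
  have H2 : ∀ s ∈ I, HasDerivAt (qd q 2) 0 s := by
    intro s hs
    have h := hgeo s hs 2
    rw [sum2 q s (hz s hs)] at h
    have h' : deriv (deriv (fun t => q t 2)) s = 0 := by linarith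
    exact h' ▸ hC2 2 s hs
  have H3 : ∀ s ∈ I, HasDerivAt (qd q 3) (2/(q s 3)^3 * (qd q 0 s)^2) s := by
    intro s hs
    have h := hgeo s hs 3
    rw [sum3 q s (hz s hs)] at h
    have h' : deriv (deriv (fun t => q t 3)) s = 2/(q s 3)^3 * (qd q 0 s)^2 := by
      have hzne := hz s hs
      field_simp at h ⊢
      linarith
    exact h' ▸ hC2 3 s hs
  have HZP : ∀ s ∈ I, HasDerivAt (fun s => (q s 3)^(-2:ℤ))
      ((-2:ℝ) * (q s 3)^(-3:ℤ) * qd q 3 s) s := by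
    intro s hs
    have h := HasDerivAt.comp s (hasDerivAt_zpow (-2) (q s 3) (Or.inl (hz s hs))) (hC1 3 s hs)
    have hfun : ((fun x : ℝ => x^(-2:ℤ)) ∘ fun t => q t 3)
        = fun t => (q t 3)^(-2:ℤ) := rfl
    rw [hfun] at h
    have hval : ((-2:ℤ):ℝ) * (q s 3)^(-2-1:ℤ) * qd q 3 s
        = (-2:ℝ) * (q s 3)^(-3:ℤ) * qd q 3 s := by
      norm_num
    rw [hval] at h
    exact h
  intro f hf
  simp only [List.mem_cons, List.not_mem_nil, or_false] at hf
  have hzpow : ∀ s : ℝ, q s 3 ≠ 0 → (q s 3)^(-2:ℤ) = ((q s 3)^2)⁻¹ := by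
    intro s _
    rw [zpow_neg, show ((2:ℤ)) = ((2:ℕ):ℤ) from rfl, zpow_natCast]
  have hzpow3 : ∀ s : ℝ, q s 3 ≠ 0 → (q s 3)^(-3:ℤ) = ((q s 3)^3)⁻¹ := by
    intro s _
    rw [zpow_neg, show ((3:ℤ)) = ((3:ℕ):ℤ) from rfl, zpow_natCast]
  rcases hf with rfl | rfl | rfl | rfl | rfl | rfl | rfl | rfl | rfl
  -- I₁
  · refine const_of_deriv_zero I hIconn _ (fun s hs => ?_)
    exact (H0 s hs).neg.congr_deriv neg_zero
  -- I₂
  · refine const_of_deriv_zero I hIconn _ (fun s hs => ?_)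
    have hzne := hz s hs
    have hne : (q s 3)^2 ≠ 0 := pow_ne_zero _ hzne
    have h := (((hasDerivAt_const s (-2:ℝ)).div ((hC1 3 s hs).pow 2) hne).mul
      (H0 s hs)).sub (H1 s hs)
    refine h.congr_deriv (Eq.symm ?_)
    simp only [Pi.pow_apply, Pi.mul_apply, Pi.add_apply, Pi.sub_apply, Pi.neg_apply]
    field_simp
    ring
  -- I₃
  · exact const_of_deriv_zero I hIconn _ (fun s hs => H2 s hs)
  -- I₄
  · refine const_of_deriv_zero I hIconn _ (fun s hs => ?_)
    have h := ((hC1 0 s hs).mul (H2 s hs)).sub ((hC1 2 s hs).mul (H0 s hs))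
    refine h.congr_deriv (Eq.symm ?_)
    ring
  -- Q₁
  · refine const_of_deriv_zero I hIconn _ (fun s hs => ?_)
    have hzne := hz s hs
    have t1 := (((hC1 3 s hs).pow 4).neg).mul ((H2 s hs).pow 2)
    have t2 := ((((hC1 2 s hs).const_mul (2:ℝ)).mul ((hC1 3 s hs).pow 3)).mul
      (H2 s hs)).mul (H3 s hs)
    have t3 := ((((H0 s hs).pow 2).const_mul (2:ℝ)).add
      (((hC1 3 s hs).pow 2).mul ((H3 s hs).pow 2))).mul ((hC1 2 s hs).pow 2)
    have h := (HZP s hs).mul ((t1.add t2).sub t3)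
    refine h.congr_deriv (Eq.symm ?_)
    simp only [Pi.pow_apply, Pi.mul_apply, Pi.add_apply, Pi.sub_apply, Pi.neg_apply]
    rw [hzpow s hzne, hzpow3 s hzne]
    field_simp
    ring
  -- Q₂
  · refine const_of_deriv_zero I hIconn _ (fun s hs => ?_)
    have hzne := hz s hs
    have t1 := ((hC1 2 s hs).const_mul (2:ℝ)).mul ((H0 s hs).pow 2)
    have t2 := (((hC1 3 s hs).pow 3).mul (H2 s hs)).mul (H3 s hs)
    have t3 := ((hC1 2 s hs).mul ((hC1 3 s hs).pow 2)).mul ((H3 s hs).pow 2)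
    have h := (HZP s hs).mul ((t1.sub t2).add t3)
    refine h.congr_deriv (Eq.symm ?_)
    simp only [Pi.pow_apply, Pi.mul_apply, Pi.add_apply, Pi.sub_apply, Pi.neg_apply]
    rw [hzpow s hzne, hzpow3 s hzne]
    field_simp
    ring
  -- Q₃
  · refine const_of_deriv_zero I hIconn _ (fun s hs => ?_)
    have hzne := hz s hs
    have t1 := (((hC1 3 s hs).pow 3).mul (H0 s hs)).mul
      (((hC1 3 s hs).mul (H2 s hs)).sub ((H3 s hs).mul (hC1 2 s hs)))
    have t2 := ((hC1 0 s hs).mul (hC1 2 s hs)).mul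
      ((((H0 s hs).pow 2).const_mul (2:ℝ)).add (((hC1 3 s hs).pow 2).mul ((H3 s hs).pow 2)))
    have t3 := (((hC1 0 s hs).mul ((hC1 3 s hs).pow 3)).mul (H2 s hs)).mul (H3 s hs)
    have h := (HZP s hs).mul ((t1.add t2).sub t3)
    refine h.congr_deriv (Eq.symm ?_)
    simp only [Pi.pow_apply, Pi.mul_apply, Pi.add_apply, Pi.sub_apply, Pi.neg_apply]
    rw [hzpow s hzne, hzpow3 s hzne]
    field_simp
    ring
  -- Q₄
  · refine const_of_deriv_zero I hIconn _ (fun s hs => ?_)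
    have hzne := hz s hs
    have t1 := ((hC1 0 s hs).const_mul (2:ℝ)).mul ((H0 s hs).pow 2)
    have t2 := (((hC1 3 s hs).pow 3).mul (H0 s hs)).mul (H3 s hs)
    have t3 := ((hC1 0 s hs).mul ((hC1 3 s hs).pow 2)).mul ((H3 s hs).pow 2)
    have h := (HZP s hs).mul ((t1.sub t2).add t3)
    refine h.congr_deriv (Eq.symm ?_)
    simp only [Pi.pow_apply, Pi.mul_apply, Pi.add_apply, Pi.sub_apply, Pi.neg_apply]
    rw [hzpow s hzne, hzpow3 s hzne]
    field_simp
    ring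
  -- Q₅
  · refine const_of_deriv_zero I hIconn _ (fun s hs => ?_)
    have hzne := hz s hs
    have t1 := ((hC1 0 s hs).pow 2).mul
      ((((H0 s hs).pow 2).const_mul (2:ℝ)).add (((hC1 3 s hs).pow 2).mul ((H3 s hs).pow 2)))
    have t2 := ((hC1 3 s hs).pow 4).mul ((H0 s hs).pow 2)
    have t3 := ((((hC1 0 s hs).const_mul (2:ℝ)).mul ((hC1 3 s hs).pow 3)).mul (H0 s hs)).mul (H3 s hs)
    have h := (HZP s hs).mul ((t1.add t2).sub t3)
    refine h.congr_deriv (Eq.symm ?_)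
    simp only [Pi.pow_apply, Pi.mul_apply, Pi.add_apply, Pi.sub_apply, Pi.neg_apply]
    rw [hzpow s hzne, hzpow3 s hzne]
    field_simp
    ring


end BivPPWave

end
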